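/- arXiv:1311.4643 — 3 statements merged into one kernel-verified Lean document; each statement's English description precedes it below -/
import Mathlib

section
/- Let A be a nonzero m×n real matrix and p any sampling distribution on the entries of A. Then |σ(p)²/σ̃(p)² − 1| ≤ ‖A‖₂² / (∑_{i=1}^m ‖A_(i)‖₁²). -/
open Matrix

/-- The spectral norm (ℓ2→ℓ2 operator norm) of a rectangular real matrix. -/
noncomputable def specNorm {m n : ℕ} (A : Matrix (Fin m) (Fin n) ℝ) : ℝ :=
  ‖(Matrix.toEuclideanLin A).toContinuousLinearMap‖

/-- `σ̃(p)²`: the maximum over rows and columns of `∑ (A i j)² / p i j`. -/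
noncomputable def sigmaTildeSq {m n : ℕ} (A : Matrix (Fin m) (Fin n) ℝ)
    (p : Fin m → Fin n → ℝ) : ℝ :=
  max (⨆ i, ∑ j, A i j ^ 2 / p i j) (⨆ j, ∑ i, A i j ^ 2 / p i j)

/-- `σ(p)² = max{ ‖D_r(p) − A Aᵀ‖₂, ‖D_c(p) − Aᵀ A‖₂ }`. -/
noncomputable def sigmaSq {m n : ℕ} (A : Matrix (Fin m) (Fin n) ℝ)
    (p : Fin m → Fin n → ℝ) : ℝ :=
  max (specNorm (Matrix.diagonal (fun i => ∑ j, A i j ^ 2 / p i j) - A * Aᵀ))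
      (specNorm (Matrix.diagonal (fun j => ∑ i, A i j ^ 2 / p i j) - Aᵀ * A))

/-!
The diagonals `R`, `C` of `D_r(p)`, `D_c(p)` are nonnegative, so `σ̃(p)²` is the larger of their
sup norms, i.e. of `‖D_r(p)‖₂` and `‖D_c(p)‖₂`. As `‖A Aᵀ‖₂ = ‖Aᵀ A‖₂ = ‖A‖₂²`, the triangle
inequality gives `|σ(p)² − σ̃(p)²| ≤ ‖A‖₂²`. Cauchy–Schwarz gives `‖A_(i)‖₁² ≤ (∑_j p i j) R i`,
and summing over `i` with `∑ p = 1` yields `∑_i ‖A_(i)‖₁² ≤ max_i R i ≤ σ̃(p)²`; dividing the first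
bound by `σ̃(p)²` finishes the proof.
-/

open scoped Matrix.Norms.L2Operator

lemma Pi.norm_eq_iSup_of_nonneg {ι : Type*} [Fintype ι] {f : ι → ℝ} (hf : 0 ≤ f) :
    ‖f‖ = ⨆ i, f i := by
  refine le_antisymm ((pi_norm_le_iff_of_nonneg (Real.iSup_nonneg hf)).2 fun i => ?_)
    (Real.iSup_le (fun i => ?_) (norm_nonneg f))
  · rw [Real.norm_of_nonneg (hf i)]
    exact le_ciSup (Finite.bddAbove_range f) i
  · exact (Real.le_norm_self _).trans (norm_le_pi_norm f i)

lemma Finset.sq_sum_abs_le_sum_mul_sum_sq_div {ι : Type*} (s : Finset ι) (a p : ι → ℝ)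
    (hp : ∀ i ∈ s, 0 ≤ p i) (hap : ∀ i ∈ s, a i ≠ 0 → 0 < p i) :
    (∑ i ∈ s, |a i|) ^ 2 ≤ (∑ i ∈ s, p i) * ∑ i ∈ s, a i ^ 2 / p i := by
  refine sum_sq_le_sum_mul_sum_of_sq_le_mul s hp
    (fun i hi => div_nonneg (sq_nonneg _) (hp i hi)) fun i hi => ?_
  rw [sq_abs]
  by_cases ha : a i = 0
  · simp [ha]
  · rw [mul_div_cancel₀ _ (hap i hi ha).ne']

namespace Matrix

variable {m n : Type*} [Fintype m] [Fintype n] [DecidableEq m] [DecidableEq n]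

lemma l2_opNorm_transpose (A : Matrix m n ℝ) : ‖Aᵀ‖ = ‖A‖ := by
  rw [← conjTranspose_eq_transpose_of_trivial, l2_opNorm_conjTranspose]

lemma l2_opNorm_mul_transpose_self (A : Matrix m n ℝ) : ‖A * Aᵀ‖ = ‖A‖ ^ 2 := by
  simpa only [conjTranspose_eq_transpose_of_trivial, transpose_transpose, l2_opNorm_transpose,
    ← sq] using l2_opNorm_conjTranspose_mul_self Aᵀ

lemma abs_l2_opNorm_diagonal_sub_sub_norm_le {𝕜 : Type*} [RCLike 𝕜] (d : n → 𝕜)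
    (B : Matrix n n 𝕜) : |‖diagonal d - B‖ - ‖d‖| ≤ ‖B‖ := by
  rw [← l2_opNorm_diagonal]
  simpa using abs_norm_sub_norm_le (diagonal d - B) (diagonal d)

lemma abs_l2_opNorm_diagonal_sub_mul_transpose_sub_iSup_le (A : Matrix m n ℝ)
    {d : m → ℝ} (hd : 0 ≤ d) : |‖diagonal d - A * Aᵀ‖ - ⨆ i, d i| ≤ ‖A‖ ^ 2 := by
  simpa only [Pi.norm_eq_iSup_of_nonneg hd, l2_opNorm_mul_transpose_self] using
    abs_l2_opNorm_diagonal_sub_sub_norm_le d (A * Aᵀ)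

end Matrix

section Sampling

variable {m n : ℕ} (A : Matrix (Fin m) (Fin n) ℝ) (p : Fin m → Fin n → ℝ)

lemma abs_sigmaSq_sub_sigmaTildeSq_le (hp0 : ∀ i j, 0 ≤ p i j) :
    |sigmaSq A p - sigmaTildeSq A p| ≤ specNorm A ^ 2 := by
  have hrow : 0 ≤ fun i => ∑ j, A i j ^ 2 / p i j := fun i =>
    Finset.sum_nonneg fun j _ => div_nonneg (sq_nonneg _) (hp0 i j)
  have hcol : 0 ≤ fun j => ∑ i, A i j ^ 2 / p i j := fun j =>
    Finset.sum_nonneg fun i _ => div_nonneg (sq_nonneg _) (hp0 i j)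
  refine (abs_max_sub_max_le_max _ _ _ _).trans (max_le ?_ ?_)
  · exact abs_l2_opNorm_diagonal_sub_mul_transpose_sub_iSup_le A hrow
  · have h := abs_l2_opNorm_diagonal_sub_mul_transpose_sub_iSup_le Aᵀ hcol
    rwa [transpose_transpose, l2_opNorm_transpose] at h

lemma sum_sq_sum_abs_le_sigmaTildeSq (hp0 : ∀ i j, 0 ≤ p i j)
    (hpsum : ∑ i, ∑ j, p i j = 1) (hppos : ∀ i j, A i j ≠ 0 → 0 < p i j) :
    ∑ i, (∑ j, |A i j|) ^ 2 ≤ sigmaTildeSq A p := by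
  set R : Fin m → ℝ := fun i => ∑ j, A i j ^ 2 / p i j
  calc ∑ i, (∑ j, |A i j|) ^ 2 ≤ ∑ i, (∑ j, p i j) * R i :=
        Finset.sum_le_sum fun i _ => Finset.sq_sum_abs_le_sum_mul_sum_sq_div _ _ _
          (fun j _ => hp0 i j) fun j _ => hppos i j
    _ ≤ ∑ i, (∑ j, p i j) * ⨆ i, R i :=
        Finset.sum_le_sum fun i _ => mul_le_mul_of_nonneg_left
          (le_ciSup (Finite.bddAbove_range R) i) (Finset.sum_nonneg fun j _ => hp0 i j)
    _ = ⨆ i, R i := by rw [← Finset.sum_mul, hpsum, one_mul]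
    _ ≤ sigmaTildeSq A p := le_max_left _ _

lemma sum_sq_sum_abs_pos {A : Matrix (Fin m) (Fin n) ℝ} (hA : A ≠ 0) :
    0 < ∑ i, (∑ j, |A i j|) ^ 2 := by
  obtain ⟨i, j, hij⟩ : ∃ i j, A i j ≠ 0 := by
    by_contra! h
    exact hA (Matrix.ext h)
  have hrow : 0 < ∑ j, |A i j| :=
    Finset.sum_pos' (fun _ _ => abs_nonneg _) ⟨j, Finset.mem_univ j, abs_pos.mpr hij⟩
  exact Finset.sum_pos' (fun _ _ => sq_nonneg _) ⟨i, Finset.mem_univ i, by positivity⟩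

end Sampling

theorem stmt3_general (m n : ℕ)
    (A : Matrix (Fin m) (Fin n) ℝ) (hA : A ≠ 0) (p : Fin m → Fin n → ℝ)
    (hp0 : ∀ i j, 0 ≤ p i j) (hpsum : ∑ i, ∑ j, p i j = 1)
    (hppos : ∀ i j, A i j ≠ 0 → 0 < p i j) :
    |sigmaSq A p / sigmaTildeSq A p - 1| ≤ specNorm A ^ 2 / ∑ i, (∑ j, |A i j|) ^ 2 := by
  have hS := sum_sq_sum_abs_pos hA
  have hST := sum_sq_sum_abs_le_sigmaTildeSq A p hp0 hpsum hppos
  have hT := hS.trans_le hST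
  calc |sigmaSq A p / sigmaTildeSq A p - 1|
      = |sigmaSq A p - sigmaTildeSq A p| / sigmaTildeSq A p := by
        rw [div_sub_one hT.ne', abs_div, abs_of_pos hT]
    _ ≤ specNorm A ^ 2 / sigmaTildeSq A p := by
        gcongr
        exact abs_sigmaSq_sub_sigmaTildeSq_le A p hp0
    _ ≤ specNorm A ^ 2 / ∑ i, (∑ j, |A i j|) ^ 2 := by gcongr

/-- For a nonzero matrix `A` and any sampling distribution `p`,
`|σ(p)²/σ̃(p)² − 1| ≤ ‖A‖₂² / ∑_i ‖A_(i)‖₁²`. -/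
theorem stmt3 (m n : ℕ) (hm : 0 < m) (hn : 0 < n)
    (A : Matrix (Fin m) (Fin n) ℝ) (hA : A ≠ 0) (p : Fin m → Fin n → ℝ)
    (hp0 : ∀ i j, 0 ≤ p i j) (hpsum : ∑ i, ∑ j, p i j = 1)
    (hppos : ∀ i j, A i j ≠ 0 → 0 < p i j) :
    |sigmaSq A p / sigmaTildeSq A p - 1| ≤ specNorm A ^ 2 / ∑ i, (∑ j, |A i j|) ^ 2 :=
  stmt3_general m n A hA p hp0 hpsum hppos
end

section
/- Let A be an m×n real matrix all of whose rows are nonzero and such that min_i ‖A_(i)‖₁ ≥ max_j ‖A^(j)‖₁. Let ρ be a distribution over the rows with ρ_i > 0 and ∑_i ρ_i = 1, and set p i j = ρ_i·|A i j|/‖A_(i)‖₁. Then ε₆(p) ≤ ε₅(p). -/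
/-!
Write `R i = ∑ j, |A i j|` and `Q i = R i / ρ i`. For the sampling probabilities
`p i j = ρ i |A i j| / R i` every entry contributes `A i j ^ 2 / p i j = |A i j| Q i`, and every
nonzero entry has `|A i j| / p i j = Q i`. Let `i₀` maximise `Q`. Column `j` then has
`∑ i, A i j ^ 2 / p i j ≤ ‖A^(j)‖₁ Q i₀ ≤ R i₀ Q i₀`, which is the corresponding sum of row `i₀`,
and its largest ratio is at most `Q i₀`, the largest ratio of the (nonzero) row `i₀`. Hence
every column term of `ε₆` is bounded by the row term of `ε₅` at `i₀`.
-/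

open Matrix

/-- `ε₅(p) = max_i [ α·√(∑_j (A i j)²/p i j) + β·max_j |A i j|/p i j ]`. -/
noncomputable def eps5 {m n : ℕ} (α β : ℝ) (A : Matrix (Fin m) (Fin n) ℝ)
    (p : Fin m → Fin n → ℝ) : ℝ :=
  ⨆ i, (α * Real.sqrt (∑ j, A i j ^ 2 / p i j) + β * ⨆ j, |A i j| / p i j)

/-- `ε₆(p) = max_j [ α·√(∑_i (A i j)²/p i j) + β·max_i |A i j|/p i j ]`. -/
noncomputable def eps6 {m n : ℕ} (α β : ℝ) (A : Matrix (Fin m) (Fin n) ℝ)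
    (p : Fin m → Fin n → ℝ) : ℝ :=
  ⨆ j, (α * Real.sqrt (∑ i, A i j ^ 2 / p i j) + β * ⨆ i, |A i j| / p i j)

/-- `α = √(log((m+n)/δ)/s)`. -/
noncomputable def alphaC (m n s : ℕ) (δ : ℝ) : ℝ :=
  Real.sqrt (Real.log ((m + n : ℝ) / δ) / s)

/-- `β = log((m+n)/δ)/(3s)`. -/
noncomputable def betaC (m n s : ℕ) (δ : ℝ) : ℝ :=
  Real.log ((m + n : ℝ) / δ) / (3 * s)

theorem betaC_nonneg {m n s : ℕ} {δ : ℝ} (hδ : 0 < δ) (hδmn : δ ≤ m + n) :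
    0 ≤ betaC m n s δ :=
  div_nonneg (Real.log_nonneg ((one_le_div hδ).2 hδmn)) (by positivity)

theorem eps6_le_eps5_of_dominating_row {m n : ℕ} [Nonempty (Fin n)] {α β : ℝ}
    (hα : 0 ≤ α) (hβ : 0 ≤ β) {A : Matrix (Fin m) (Fin n) ℝ} {p : Fin m → Fin n → ℝ}
    (i₀ : Fin m) (hsq : ∀ j, ∑ i, A i j ^ 2 / p i j ≤ ∑ j', A i₀ j' ^ 2 / p i₀ j')
    (hmax : ∀ j, ⨆ i, |A i j| / p i j ≤ ⨆ j', |A i₀ j'| / p i₀ j') :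
    eps6 α β A p ≤ eps5 α β A p := by
  refine ciSup_le fun j => le_trans ?_ (le_ciSup (Finite.bddAbove_range _) i₀)
  gcongr
  exacts [hsq j, hmax j]

noncomputable def l1RowSampling {ι κ : Type*} [Fintype κ] (ρ : ι → ℝ) (A : Matrix ι κ ℝ) :
    ι → κ → ℝ :=
  fun i j => ρ i * |A i j| / ∑ j', |A i j'|

section l1RowSampling

variable {ι κ : Type*} [Fintype κ] {ρ : ι → ℝ} {A : Matrix ι κ ℝ}

theorem sq_div_l1RowSampling (i : ι) (j : κ) :
    A i j ^ 2 / l1RowSampling ρ A i j = |A i j| * ((∑ j', |A i j'|) / ρ i) := by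
  rcases eq_or_ne (A i j) 0 with h | h
  · simp [h]
  · rw [l1RowSampling, div_div_eq_mul_div, ← sq_abs, sq, mul_assoc,
      mul_comm (ρ i), mul_div_mul_left _ _ (abs_ne_zero.2 h), mul_div_assoc]

theorem abs_div_l1RowSampling_of_ne_zero {i : ι} {j : κ} (h : A i j ≠ 0) :
    |A i j| / l1RowSampling ρ A i j = (∑ j', |A i j'|) / ρ i := by
  rw [l1RowSampling, div_div_eq_mul_div, mul_comm (ρ i), mul_div_mul_left _ _ (abs_ne_zero.2 h)]

theorem abs_div_l1RowSampling_le {i : ι} (hρ : 0 ≤ ρ i) (j : κ) :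
    |A i j| / l1RowSampling ρ A i j ≤ (∑ j', |A i j'|) / ρ i := by
  rcases eq_or_ne (A i j) 0 with h | h
  · simpa [h] using div_nonneg (Finset.sum_nonneg fun _ _ => abs_nonneg _) hρ
  · exact (abs_div_l1RowSampling_of_ne_zero h).le

theorem iSup_abs_div_l1RowSampling {i : ι} (hρ : 0 ≤ ρ i) (hrow : ∃ j, A i j ≠ 0) :
    ⨆ j, |A i j| / l1RowSampling ρ A i j = (∑ j', |A i j'|) / ρ i := by
  obtain ⟨j, hj⟩ := hrow
  have : Nonempty κ := ⟨j⟩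
  refine le_antisymm (ciSup_le (abs_div_l1RowSampling_le hρ)) ?_
  calc (∑ j', |A i j'|) / ρ i = |A i j| / l1RowSampling ρ A i j :=
        (abs_div_l1RowSampling_of_ne_zero hj).symm
    _ ≤ ⨆ j, |A i j| / l1RowSampling ρ A i j :=
        le_ciSup (f := fun j => |A i j| / l1RowSampling ρ A i j) (Finite.bddAbove_range _) j

variable {i₀ : ι}

theorem sum_sq_div_l1RowSampling_le [Fintype ι]
    (hmax : ∀ i, (∑ j, |A i j|) / ρ i ≤ (∑ j, |A i₀ j|) / ρ i₀) (hρ : 0 ≤ ρ i₀) {j : κ}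
    (hcol : ∑ i, |A i j| ≤ ∑ j', |A i₀ j'|) :
    ∑ i, A i j ^ 2 / l1RowSampling ρ A i j ≤ ∑ j', A i₀ j' ^ 2 / l1RowSampling ρ A i₀ j' := by
  have hQ : 0 ≤ (∑ j', |A i₀ j'|) / ρ i₀ :=
    div_nonneg (Finset.sum_nonneg fun _ _ => abs_nonneg _) hρ
  simp only [sq_div_l1RowSampling]
  calc ∑ i, |A i j| * ((∑ j', |A i j'|) / ρ i)
      ≤ ∑ i, |A i j| * ((∑ j', |A i₀ j'|) / ρ i₀) :=
        Finset.sum_le_sum fun i _ => mul_le_mul_of_nonneg_left (hmax i) (abs_nonneg _)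
    _ = (∑ i, |A i j|) * ((∑ j', |A i₀ j'|) / ρ i₀) := (Finset.sum_mul ..).symm
    _ ≤ (∑ j', |A i₀ j'|) * ((∑ j', |A i₀ j'|) / ρ i₀) := by gcongr
    _ = ∑ j', |A i₀ j'| * ((∑ j', |A i₀ j'|) / ρ i₀) := Finset.sum_mul ..

theorem iSup_abs_div_l1RowSampling_le [Nonempty ι]
    (hmax : ∀ i, (∑ j, |A i j|) / ρ i ≤ (∑ j, |A i₀ j|) / ρ i₀) (hρ : ∀ i, 0 ≤ ρ i) (j : κ) :
    ⨆ i, |A i j| / l1RowSampling ρ A i j ≤ (∑ j', |A i₀ j'|) / ρ i₀ :=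
  ciSup_le fun i => (abs_div_l1RowSampling_le (hρ i) j).trans (hmax i)

end l1RowSampling

theorem stmt14_general (m n : ℕ) (hm : 0 < m)
    (A : Matrix (Fin m) (Fin n) ℝ) (hrows : ∀ i, ∃ j, A i j ≠ 0)
    (hskew : ∀ i j, (∑ i', |A i' j|) ≤ ∑ j', |A i j'|)
    (s : ℕ) (δ : ℝ) (hδ : δ ∈ Set.Ioo (0 : ℝ) 1)
    (ρ : Fin m → ℝ) (hρ : ∀ i, 0 < ρ i) :
    eps6 (alphaC m n s δ) (betaC m n s δ) A
        (fun i j => ρ i * |A i j| / ∑ j', |A i j'|) ≤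
      eps5 (alphaC m n s δ) (betaC m n s δ) A
        (fun i j => ρ i * |A i j| / ∑ j', |A i j'|) := by
  have : Nonempty (Fin m) := ⟨⟨0, hm⟩⟩
  obtain ⟨i₀, hi₀⟩ := Finite.exists_max fun i => (∑ j, |A i j|) / ρ i
  have : Nonempty (Fin n) := (hrows i₀).nonempty
  have hρ₀ : ∀ i, 0 ≤ ρ i := fun i => (hρ i).le
  have hδmn : δ ≤ m + n := by
    have : (1 : ℝ) ≤ m := by exact_mod_cast hm
    linarith [hδ.2, (n.cast_nonneg : (0 : ℝ) ≤ n)]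
  refine eps6_le_eps5_of_dominating_row (Real.sqrt_nonneg _) (betaC_nonneg hδ.1 hδmn) i₀
    (fun j => sum_sq_div_l1RowSampling_le hi₀ (hρ₀ i₀) (hskew i₀ j)) fun j => ?_
  change _ ≤ ⨆ j', |A i₀ j'| / l1RowSampling ρ A i₀ j'
  rw [iSup_abs_div_l1RowSampling (hρ₀ i₀) (hrows i₀)]
  exact iSup_abs_div_l1RowSampling_le hi₀ hρ₀ j

/-- If every row of `A` is nonzero, `min_i ‖A_(i)‖₁ ≥ max_j ‖A^(j)‖₁`, and
`p i j = ρ_i·|A i j|/‖A_(i)‖₁` for a positive row distribution `ρ`, then `ε₆(p) ≤ ε₅(p)`. -/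
theorem stmt14 (m n : ℕ) (hm : 0 < m) (hn : 0 < n)
    (A : Matrix (Fin m) (Fin n) ℝ) (hrows : ∀ i, ∃ j, A i j ≠ 0)
    (hskew : ∀ i j, (∑ i', |A i' j|) ≤ ∑ j', |A i j'|)
    (s : ℕ) (hs : 1 ≤ s) (δ : ℝ) (hδ : δ ∈ Set.Ioo (0 : ℝ) 1)
    (ρ : Fin m → ℝ) (hρ : ∀ i, 0 < ρ i) (hρsum : ∑ i, ρ i = 1) :
    eps6 (alphaC m n s δ) (betaC m n s δ) A
        (fun i j => ρ i * |A i j| / ∑ j', |A i j'|) ≤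
      eps5 (alphaC m n s δ) (betaC m n s δ) A
        (fun i j => ρ i * |A i j| / ∑ j', |A i j'|) :=
  stmt14_general m n hm A hrows hskew s δ hδ ρ hρ
end

section
/- Let A be an m×n real matrix all of whose rows are nonzero and such that min_i ‖A_(i)‖₁ ≥ max_j ‖A^(j)‖₁, and let p* be the algorithm's distribution. Then p* minimizes ε₄ = max{ε₅, ε₆}: for every sampling distribution q on the entries of A, max{ε₅(p*), ε₆(p*)} ≤ max{ε₅(q), ε₆(q)}. -/
open Matrix

/-- `ρ_i(ζ) = ( α z_i/(2ζ) + √( (α z_i/(2ζ))² + β z_i/ζ ) )²`. -/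
noncomputable def rhoFun (α β z ζ : ℝ) : ℝ :=
  (α * z / (2 * ζ) + Real.sqrt ((α * z / (2 * ζ)) ^ 2 + β * z / ζ)) ^ 2

/-- The algorithm's distribution: `p* i j = ρ_i(ζ₁) · |A i j| / ‖A_(i)‖₁`
with `z_i = ‖A_(i)‖₁`. -/
noncomputable def pstar {m n : ℕ} (α β : ℝ) (A : Matrix (Fin m) (Fin n) ℝ)
    (ζ₁ : ℝ) : Fin m → Fin n → ℝ :=
  fun i j => rhoFun α β (∑ j', |A i j'|) ζ₁ * |A i j| / ∑ j', |A i j'|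

/-!
Write `z_i = ‖A_(i)‖₁`. For any `q`, Cauchy–Schwarz and an averaging argument bound the error of
row `i` below by `α z_i / √Q_i + β z_i / Q_i`, where `Q_i = ∑_j q i j` is the mass `q` puts on
that row, with equality when `q` is proportional to `|A i ·|` on the row. The function `ρ` is
chosen so that this bound equals `ζ₁` at `Q_i = ρ_i(ζ₁)`; since the masses of `q` and of `p*`
both sum to `1`, some row has `Q_i ≤ ρ_i(ζ₁)`, so `ε₅(q) ≥ ζ₁ = ε₅(p*)`. Finally, every ratio
`|A i j| / p* i j` is `z_i / ρ_i(ζ₁)` or `0`, so the error of column `j` is at most that of a row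
of norm `≥ ‖A^(j)‖₁` with the largest ratio, whence `ε₆(p*) ≤ ζ₁`.
-/

open Finset

noncomputable def lineError {ι : Type*} [Fintype ι] (α β : ℝ) (a p : ι → ℝ) : ℝ :=
  α * Real.sqrt (∑ j, a j ^ 2 / p j) + β * ⨆ j, |a j| / p j

lemma eps5_eq_iSup_lineError {m n : ℕ} (α β : ℝ) (A : Matrix (Fin m) (Fin n) ℝ)
    (p : Fin m → Fin n → ℝ) : eps5 α β A p = ⨆ i, lineError α β (A i) (p i) :=
  rfl

lemma eps6_eq_iSup_lineError {m n : ℕ} (α β : ℝ) (A : Matrix (Fin m) (Fin n) ℝ)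
    (p : Fin m → Fin n → ℝ) :
    eps6 α β A p = ⨆ j, lineError α β (fun i ↦ A i j) (fun i ↦ p i j) :=
  rfl

/-- The line error of a line of `ℓ1` norm `z` all of whose nonzero ratios `|a j| / p j`
equal `w`. -/
noncomputable def uniformLineError (α β z w : ℝ) : ℝ :=
  α * Real.sqrt (z * w) + β * w

lemma uniformLineError_nonneg {α β z w : ℝ} (hα : 0 ≤ α) (hβ : 0 ≤ β) (hw : 0 ≤ w) :
    0 ≤ uniformLineError α β z w := by
  unfold uniformLineError
  positivity

section LineError

variable {ι : Type*} [Fintype ι] {α β : ℝ} {a p : ι → ℝ}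

lemma lineError_le_uniformLineError (hα : 0 ≤ α) (hβ : 0 ≤ β) {z w : ℝ} (hw : 0 ≤ w)
    (hz : ∑ j, |a j| ≤ z) (hsq : ∀ j, a j ^ 2 / p j ≤ |a j| * w)
    (hratio : ∀ j, |a j| / p j ≤ w) :
    lineError α β a p ≤ uniformLineError α β z w := by
  have hsum : ∑ j, a j ^ 2 / p j ≤ z * w :=
    calc ∑ j, a j ^ 2 / p j ≤ ∑ j, |a j| * w := sum_le_sum fun j _ ↦ hsq j
      _ = (∑ j, |a j|) * w := (sum_mul _ _ _).symm
      _ ≤ z * w := mul_le_mul_of_nonneg_right hz hw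
  have hsup : ⨆ j, |a j| / p j ≤ w := Real.iSup_le hratio hw
  unfold lineError uniformLineError
  gcongr

variable (hp : ∀ j, 0 ≤ p j) (hsupp : ∀ j, a j ≠ 0 → 0 < p j)
include hp hsupp

lemma sq_sum_abs_le_sum_sq_div_mul_sum :
    (∑ j, |a j|) ^ 2 ≤ (∑ j, a j ^ 2 / p j) * ∑ j, p j := by
  refine sum_sq_le_sum_mul_sum_of_sq_le_mul _ (fun j _ ↦ div_nonneg (sq_nonneg _) (hp j))
    (fun j _ ↦ hp j) fun j _ ↦ ?_
  rcases eq_or_ne (a j) 0 with h | h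
  · simp [h]
  · rw [sq_abs, div_mul_cancel₀ _ (hsupp j h).ne']

lemma sum_abs_le_iSup_div_mul_sum : ∑ j, |a j| ≤ (⨆ j, |a j| / p j) * ∑ j, p j := by
  rw [mul_sum]
  refine sum_le_sum fun j _ ↦ ?_
  rcases eq_or_ne (a j) 0 with h | h
  · rw [h, abs_zero]
    exact mul_nonneg (Real.iSup_nonneg fun j ↦ div_nonneg (abs_nonneg _) (hp j)) (hp j)
  · calc |a j| = |a j| / p j * p j := (div_mul_cancel₀ _ (hsupp j h).ne').symm
      _ ≤ (⨆ j, |a j| / p j) * p j :=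
        mul_le_mul_of_nonneg_right
          (le_ciSup (f := fun j ↦ |a j| / p j) (Set.finite_range _).bddAbove j) (hp j)

lemma uniformLineError_le_lineError (hα : 0 ≤ α) (hβ : 0 ≤ β) (hpos : 0 < ∑ j, p j) :
    uniformLineError α β (∑ j, |a j|) ((∑ j, |a j|) / ∑ j, p j) ≤ lineError α β a p := by
  have hsq : (∑ j, |a j|) * ((∑ j, |a j|) / ∑ j, p j) ≤ ∑ j, a j ^ 2 / p j := by
    rw [← mul_div_assoc, ← sq, div_le_iff₀ hpos]
    exact sq_sum_abs_le_sum_sq_div_mul_sum hp hsupp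
  have hsup : (∑ j, |a j|) / ∑ j, p j ≤ ⨆ j, |a j| / p j :=
    (div_le_iff₀ hpos).2 (sum_abs_le_iSup_div_mul_sum hp hsupp)
  unfold lineError uniformLineError
  gcongr

end LineError

section Rho

variable {α β z ζ : ℝ}

lemma sqrt_rhoFun_spec (hβ : 0 < β) (hz : 0 < z) (hζ : 0 < ζ) :
    ∃ t, 0 < t ∧ rhoFun α β z ζ = t ^ 2 ∧ ζ * t ^ 2 = α * z * t + β * z := by
  set c := α * z / (2 * ζ)
  set S := Real.sqrt (c ^ 2 + β * z / ζ)
  have hb : 0 < β * z / ζ := by positivity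
  have hcS : |c| < S := (Real.lt_sqrt (abs_nonneg c)).2 (by rw [sq_abs]; linarith)
  have hS : S ^ 2 = c ^ 2 + β * z / ζ := Real.sq_sqrt (by positivity)
  have hc : 2 * ζ * c = α * z := by simp only [c]; field_simp
  have hbz : ζ * (β * z / ζ) = β * z := by field_simp
  refine ⟨c + S, by linarith [neg_abs_le c], rfl, ?_⟩
  linear_combination ζ * hS + (c + S) * hc + hbz

lemma rhoFun_pos (hβ : 0 < β) (hz : 0 < z) (hζ : 0 < ζ) : 0 < rhoFun α β z ζ := by
  obtain ⟨t, ht, hρ, -⟩ := sqrt_rhoFun_spec (α := α) hβ hz hζ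
  rw [hρ]
  positivity

lemma uniformLineError_rhoFun (hβ : 0 < β) (hz : 0 < z) (hζ : 0 < ζ) :
    uniformLineError α β z (z / rhoFun α β z ζ) = ζ := by
  obtain ⟨t, ht, hρ, hquad⟩ := sqrt_rhoFun_spec (α := α) hβ hz hζ
  rw [uniformLineError, hρ, ← mul_div_assoc, ← sq, ← div_pow, Real.sqrt_sq (by positivity)]
  field_simp
  linear_combination -hquad

end Rho

noncomputable def rowProportional {m n : ℕ} (A : Matrix (Fin m) (Fin n) ℝ) (r : Fin m → ℝ) :
    Fin m → Fin n → ℝ :=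
  fun i j ↦ r i * |A i j| / ∑ j', |A i j'|

lemma pstar_eq_rowProportional {m n : ℕ} (α β : ℝ) (A : Matrix (Fin m) (Fin n) ℝ) (ζ : ℝ) :
    pstar α β A ζ = rowProportional A fun i ↦ rhoFun α β (∑ j, |A i j|) ζ :=
  rfl

lemma sq_div_mul_abs_div (x : ℝ) {r z : ℝ} (hr : 0 < r) (hz : 0 < z) :
    x ^ 2 / (r * |x| / z) = |x| * (z / r) := by
  rcases eq_or_ne x 0 with h | h
  · simp [h]
  · rw [← sq_abs]
    field_simp [abs_ne_zero.2 h]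

lemma abs_div_mul_abs_div_le (x : ℝ) {r z : ℝ} (hr : 0 < r) (hz : 0 < z) :
    |x| / (r * |x| / z) ≤ z / r := by
  rcases eq_or_ne x 0 with h | h
  · simp only [h, abs_zero, zero_div]
    positivity
  · exact (by field_simp [abs_ne_zero.2 h] : |x| / (r * |x| / z) = z / r).le

lemma sum_abs_pos {ι : Type*} [Fintype ι] {a : ι → ℝ} (ha : ∃ j, a j ≠ 0) : 0 < ∑ j, |a j| := by
  obtain ⟨j, hj⟩ := ha
  exact sum_pos' (fun j _ ↦ abs_nonneg _) ⟨j, mem_univ j, abs_pos.2 hj⟩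

lemma max_eps5_eps6_rowProportional_le {m n : ℕ} [Nonempty (Fin m)] {α β : ℝ} (hα : 0 ≤ α)
    (hβ : 0 ≤ β) {A : Matrix (Fin m) (Fin n) ℝ} (hrows : ∀ i, ∃ j, A i j ≠ 0)
    (hskew : ∀ i j, (∑ i', |A i' j|) ≤ ∑ j', |A i j'|) {r : Fin m → ℝ} (hr : ∀ i, 0 < r i)
    {c : ℝ} (hc : ∀ i, uniformLineError α β (∑ j, |A i j|) ((∑ j, |A i j|) / r i) ≤ c) :
    max (eps5 α β A (rowProportional A r)) (eps6 α β A (rowProportional A r)) ≤ c := by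
  set z : Fin m → ℝ := fun i ↦ ∑ j, |A i j|
  have hz : ∀ i, 0 < z i := fun i ↦ sum_abs_pos (hrows i)
  obtain ⟨i₀, hi₀⟩ := Finite.exists_max fun i ↦ z i / r i
  have hw : ∀ i, 0 ≤ z i / r i := fun i ↦ (div_pos (hz i) (hr i)).le
  have hc₀ : 0 ≤ c := (uniformLineError_nonneg hα hβ (hw i₀)).trans (hc i₀)
  rw [eps5_eq_iSup_lineError, eps6_eq_iSup_lineError]
  refine max_le (Real.iSup_le (fun i ↦ (hc i).trans' ?_) hc₀)
    (Real.iSup_le (fun j ↦ (hc i₀).trans' ?_) hc₀)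
  · refine lineError_le_uniformLineError hα hβ (hw i) le_rfl (fun j ↦ ?_) fun j ↦ ?_
    · exact (sq_div_mul_abs_div _ (hr i) (hz i)).le
    · exact abs_div_mul_abs_div_le _ (hr i) (hz i)
  · refine lineError_le_uniformLineError hα hβ (hw i₀) (hskew i₀ j) (fun i ↦ ?_) fun i ↦ ?_
    · exact (sq_div_mul_abs_div _ (hr i) (hz i)).trans_le
        (mul_le_mul_of_nonneg_left (hi₀ i) (abs_nonneg _))
    · exact (abs_div_mul_abs_div_le _ (hr i) (hz i)).trans (hi₀ i)

lemma betaC_pos {m n s : ℕ} {δ : ℝ} (hm : 0 < m) (hs : 1 ≤ s) (hδ : δ ∈ Set.Ioo (0 : ℝ) 1) :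
    0 < betaC m n s δ := by
  obtain ⟨hδ₀, hδ₁⟩ := hδ
  have hmn : (1 : ℝ) ≤ m + n := by
    have : (1 : ℝ) ≤ m := by exact_mod_cast hm
    linarith [(n.cast_nonneg : (0 : ℝ) ≤ n)]
  have hlog : 0 < Real.log ((m + n : ℝ) / δ) :=
    Real.log_pos ((one_lt_div hδ₀).2 (by linarith))
  have : (0 : ℝ) < s := by exact_mod_cast hs
  exact div_pos hlog (by positivity)

theorem stmt15_general (m n : ℕ) (hm : 0 < m)
    (A : Matrix (Fin m) (Fin n) ℝ) (hrows : ∀ i, ∃ j, A i j ≠ 0)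
    (hskew : ∀ i j, (∑ i', |A i' j|) ≤ ∑ j', |A i j'|)
    (s : ℕ) (hs : 1 ≤ s) (δ : ℝ) (hδ : δ ∈ Set.Ioo (0 : ℝ) 1)
    (ζ₁ : ℝ) (hζ : 0 < ζ₁)
    (hρsum : ∑ i, rhoFun (alphaC m n s δ) (betaC m n s δ) (∑ j, |A i j|) ζ₁ = 1) :
    ∀ q : Fin m → Fin n → ℝ, (∀ i j, 0 ≤ q i j) → (∑ i, ∑ j, q i j) = 1 →
      (∀ i j, A i j ≠ 0 → 0 < q i j) →
      max (eps5 (alphaC m n s δ) (betaC m n s δ) A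
              (pstar (alphaC m n s δ) (betaC m n s δ) A ζ₁))
          (eps6 (alphaC m n s δ) (betaC m n s δ) A
              (pstar (alphaC m n s δ) (betaC m n s δ) A ζ₁)) ≤
        max (eps5 (alphaC m n s δ) (betaC m n s δ) A q)
          (eps6 (alphaC m n s δ) (betaC m n s δ) A q) := by
  intro q hq₀ hq₁ hqsupp
  have : Nonempty (Fin m) := Fin.pos_iff_nonempty.mp hm
  set α := alphaC m n s δ
  set β := betaC m n s δ
  set ρ : Fin m → ℝ := fun i ↦ rhoFun α β (∑ j, |A i j|) ζ₁
  have hα : 0 ≤ α := Real.sqrt_nonneg _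
  have hβ : 0 < β := betaC_pos hm hs hδ
  have hz : ∀ i, 0 < ∑ j, |A i j| := fun i ↦ sum_abs_pos (hrows i)
  have hρ : ∀ i, uniformLineError α β (∑ j, |A i j|) ((∑ j, |A i j|) / ρ i) = ζ₁ :=
    fun i ↦ uniformLineError_rhoFun hβ (hz i) hζ
  have hpstar : max (eps5 α β A (pstar α β A ζ₁)) (eps6 α β A (pstar α β A ζ₁)) ≤ ζ₁ := by
    rw [pstar_eq_rowProportional]
    exact max_eps5_eps6_rowProportional_le hα hβ.le hrows hskew
      (fun i ↦ rhoFun_pos hβ (hz i) hζ) fun i ↦ (hρ i).le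
  obtain ⟨i, -, hi⟩ := exists_le_of_sum_le univ_nonempty (hq₁.trans hρsum.symm).le
  have hQ : 0 < ∑ j, q i j := by
    obtain ⟨j, hj⟩ := hrows i
    exact (hqsupp i j hj).trans_le (single_le_sum (fun j _ ↦ hq₀ i j) (mem_univ j))
  have hq : ζ₁ ≤ eps5 α β A q :=
    calc ζ₁ = uniformLineError α β (∑ j, |A i j|) ((∑ j, |A i j|) / ρ i) := (hρ i).symm
      _ ≤ uniformLineError α β (∑ j, |A i j|) ((∑ j, |A i j|) / ∑ j, q i j) := by
        unfold uniformLineError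
        gcongr
      _ ≤ lineError α β (A i) (q i) :=
        uniformLineError_le_lineError (hq₀ i) (hqsupp i) hα hβ.le hQ
      _ ≤ eps5 α β A q :=
        le_ciSup (f := fun i ↦ lineError α β (A i) (q i)) (Set.finite_range _).bddAbove i
  exact hpstar.trans (hq.trans (le_max_left _ _))

/-- If every row of `A` is nonzero and `min_i ‖A_(i)‖₁ ≥ max_j ‖A^(j)‖₁`, then the
algorithm's distribution `p*` minimizes `ε₄ = max{ε₅, ε₆}` over all sampling
distributions on the entries of `A`. -/
theorem stmt15 (m n : ℕ) (hm : 0 < m) (hn : 0 < n)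
    (A : Matrix (Fin m) (Fin n) ℝ) (hrows : ∀ i, ∃ j, A i j ≠ 0)
    (hskew : ∀ i j, (∑ i', |A i' j|) ≤ ∑ j', |A i j'|)
    (s : ℕ) (hs : 1 ≤ s) (δ : ℝ) (hδ : δ ∈ Set.Ioo (0 : ℝ) 1)
    (ζ₁ : ℝ) (hζ : 0 < ζ₁)
    (hρsum : ∑ i, rhoFun (alphaC m n s δ) (betaC m n s δ) (∑ j, |A i j|) ζ₁ = 1) :
    ∀ q : Fin m → Fin n → ℝ, (∀ i j, 0 ≤ q i j) → (∑ i, ∑ j, q i j) = 1 →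
      (∀ i j, A i j ≠ 0 → 0 < q i j) →
      max (eps5 (alphaC m n s δ) (betaC m n s δ) A
              (pstar (alphaC m n s δ) (betaC m n s δ) A ζ₁))
          (eps6 (alphaC m n s δ) (betaC m n s δ) A
              (pstar (alphaC m n s δ) (betaC m n s δ) A ζ₁)) ≤
        max (eps5 (alphaC m n s δ) (betaC m n s δ) A q)
          (eps6 (alphaC m n s δ) (betaC m n s δ) A q) :=
  stmt15_general m n hm A hrows hskew s hs δ hδ ζ₁ hζ hρsum
end
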